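/- arXiv:0911.4191 — 6 statements merged into one kernel-verified Lean document; each statement's English description precedes it below -/
import Mathlib

section
/- For a univariate convex function f: ℝ → ℝ, a real number r, and real numbers s_1,...,s_m satisfying s_i·s_j ≥ 0 for all i,j, we have f(r + Σᵢ sᵢ) − f(r) ≥ Σᵢ (f(r + sᵢ) − f(r)). -/
lemma key_convex (f : ℝ → ℝ) (hf : ConvexOn ℝ Set.univ f)
    (r a b : ℝ) (hab : a * b ≥ 0) :
    f (r + a) + f (r + b) ≤ f r + f (r + a + b) := by
  rcases eq_or_ne (a + b) 0 with h | h
  · have ha : a = 0 := by nlinarith [sq_nonneg a, sq_nonneg b]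
    have hb : b = 0 := by nlinarith [sq_nonneg a, sq_nonneg b]
    simp [ha, hb]
  · have hsq : (0:ℝ) < (a + b) ^ 2 := by positivity
    have ha' : 0 ≤ a / (a + b) := by
      have h1 : 0 ≤ a * (a + b) := by nlinarith
      have : a / (a + b) = a * (a + b) / (a + b) ^ 2 := by
        field_simp
      rw [this]; positivity
    have hb' : 0 ≤ b / (a + b) := by
      have h1 : 0 ≤ b * (a + b) := by nlinarith
      have : b / (a + b) = b * (a + b) / (a + b) ^ 2 := by
        field_simp
      rw [this]; positivity
    have hsum : b / (a + b) + a / (a + b) = 1 := by field_simp; ring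
    have hsum' : a / (a + b) + b / (a + b) = 1 := by field_simp
    have h1 := hf.2 (Set.mem_univ r) (Set.mem_univ (r + a + b)) hb' ha' hsum
    have h2 := hf.2 (Set.mem_univ r) (Set.mem_univ (r + a + b)) ha' hb' hsum'
    simp only [smul_eq_mul] at h1 h2
    have e1 : b / (a + b) * r + a / (a + b) * (r + a + b) = r + a := by
      field_simp; ring
    have e2 : a / (a + b) * r + b / (a + b) * (r + a + b) = r + b := by
      field_simp; ring
    rw [e1] at h1
    rw [e2] at h2
    have h3 : b / (a + b) * f r + a / (a + b) * f (r + a + b) +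
        (a / (a + b) * f r + b / (a + b) * f (r + a + b)) = f r + f (r + a + b) := by
      linear_combination f r * hsum + f (r + a + b) * hsum'
    linarith

/-- Supermodularity of univariate convex functions with respect to
same-sign perturbations. -/
theorem supermodular_convex (f : ℝ → ℝ) (hf : ConvexOn ℝ Set.univ f)
    (r : ℝ) (m : ℕ) (s : Fin m → ℝ) (hs : ∀ i j, s i * s j ≥ 0) :
    f (r + ∑ i, s i) - f r ≥ ∑ i, (f (r + s i) - f r) := by
  induction m with
  | zero => simp
  | succ n ih =>
    have h1 := ih (fun i : Fin n => s (Fin.succ i)) (fun i j => hs (Fin.succ i) (Fin.succ j))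
    have hsign : s 0 * (∑ i : Fin n, s i.succ) ≥ 0 := by
      rw [Finset.mul_sum]
      exact Finset.sum_nonneg fun i _ => hs 0 i.succ
    have h2 := key_convex f hf r (s 0) (∑ i : Fin n, s i.succ) hsign
    rw [Fin.sum_univ_succ, Fin.sum_univ_succ]
    have e : r + (s 0 + ∑ i : Fin n, s i.succ) = r + s 0 + ∑ i : Fin n, s i.succ := by ring
    rw [e]
    linarith
end

section
/- Let f: ℝⁿ → ℝ be separable convex, i.e., f(x) = Σⱼ fⱼ(xⱼ) with each fⱼ : ℝ → ℝ convex. Let x ∈ ℝⁿ and let g_1,...,g_m ∈ ℝⁿ be vectors that all lie in a common orthant (i.e., for each coordinate j, the signs of g_{i,j} agree across i). Then f(x + Σᵢ gᵢ) − f(x) ≥ Σᵢ (f(x + gᵢ) − f(x)). -/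
/-!
A convex function of one variable has increasing increments: if `s` and `t` have the same sign,
then `a + s` and `a + t` lie between `a` and `a + s + t` and have the same sum, so
`φ (a + s) + φ (a + t) ≤ φ a + φ (a + s + t)`. By induction this gives superadditivity of the
increments `φ (a + tᵢ) - φ a` over a family of same-sign `tᵢ`, and a separable function inherits
it coordinatewise, since conformality says exactly that each coordinate family has one sign.
-/

open Finset

variable {𝕜 : Type*} [Field 𝕜] [LinearOrder 𝕜] [IsStrictOrderedRing 𝕜] {f : 𝕜 → 𝕜}

lemma ConvexOn.map_add_map_le_of_add_eq {s : Set 𝕜} (hf : ConvexOn 𝕜 s f) {a b u v : 𝕜}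
    (ha : a ∈ s) (hb : b ∈ s) (hau : a ≤ u) (hub : u ≤ b) (huv : u + v = a + b) :
    f u + f v ≤ f a + f b := by
  obtain rfl | hab := (hau.trans hub).eq_or_lt
  · obtain rfl : u = a := le_antisymm hub hau
    obtain rfl : v = u := by linarith
    rfl
  -- `u` and `v` are the convex combinations of `a` and `b` with swapped weights
  have hd : b - a ≠ 0 := (sub_pos.2 hab).ne'
  set w := (b - u) / (b - a)
  have hw₀ : 0 ≤ w := div_nonneg (by linarith) (by linarith)
  have hw₁ : 0 ≤ 1 - w := by
    rw [one_sub_div hd]; exact div_nonneg (by linarith) (by linarith)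
  have hu : w • a + (1 - w) • b = u := by simp only [w, smul_eq_mul]; field_simp; ring
  have hv : (1 - w) • a + w • b = v := by
    rw [eq_sub_of_add_eq' huv]; simp only [w, smul_eq_mul]; field_simp; ring
  have hfu := hf.2 ha hb hw₀ hw₁ (by ring)
  have hfv := hf.2 ha hb hw₁ hw₀ (by ring)
  rw [hu] at hfu
  rw [hv] at hfv
  simp only [smul_eq_mul] at hfu hfv
  linarith

lemma ConvexOn.map_add_map_le_of_mul_nonneg (hf : ConvexOn 𝕜 Set.univ f) (a : 𝕜) {s t : 𝕜}
    (hst : 0 ≤ s * t) : f (a + s) + f (a + t) ≤ f a + f (a + s + t) := by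
  rcases mul_nonneg_iff.1 hst with ⟨hs, ht⟩ | ⟨hs, ht⟩
  · exact hf.map_add_map_le_of_add_eq trivial trivial (by linarith) (by linarith) (by ring)
  · rw [add_comm (f a)]
    exact hf.map_add_map_le_of_add_eq trivial trivial (by linarith) (by linarith) (by ring)

lemma ConvexOn.sum_sub_le_map_add_sum_sub {ι : Type*} (hf : ConvexOn 𝕜 Set.univ f) (a : 𝕜)
    (t : ι → 𝕜) (S : Finset ι) (ht : ∀ i ∈ S, ∀ k ∈ S, 0 ≤ t i * t k) :
    ∑ i ∈ S, (f (a + t i) - f a) ≤ f (a + ∑ i ∈ S, t i) - f a := by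
  classical
  induction S using Finset.induction_on with
  | empty => simp
  | @insert i S hi ih =>
    have hS : ∀ k ∈ S, k ∈ insert i S := fun k => mem_insert_of_mem
    have hsign : 0 ≤ (∑ k ∈ S, t k) * t i :=
      sum_mul S t (t i) ▸ sum_nonneg fun k hk => ht k (hS k hk) i (mem_insert_self i S)
    have step := hf.map_add_map_le_of_mul_nonneg a hsign
    have ih := ih fun k hk l hl => ht k (hS k hk) l (hS l hl)
    rw [sum_insert hi, sum_insert hi, add_comm (t i), ← add_assoc]
    linarith

/-- Supermodularity of separable convex functions with respect to conformal sums. -/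
theorem separable_convex_conformal (n m : ℕ) (f : (Fin n → ℝ) → ℝ)
    (fj : Fin n → ℝ → ℝ)
    (hconv : ∀ j, ConvexOn ℝ Set.univ (fj j))
    (hsep : ∀ x : Fin n → ℝ, f x = ∑ j, fj j (x j))
    (x : Fin n → ℝ) (g : Fin m → Fin n → ℝ)
    (hconf : ∀ i k j, g i j * g k j ≥ 0) :
    f (x + ∑ i, g i) - f x ≥ ∑ i, (f (x + g i) - f x) := by
  simp only [hsep, ge_iff_le, ← sum_sub_distrib, Pi.add_apply, Finset.sum_apply]
  rw [sum_comm]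
  exact sum_le_sum fun j _ =>
    (hconv j).sum_sub_le_map_add_sum_sub (x j) (g · j) univ fun i _ k _ => hconf i k j
end

section
/- Every nonempty subset of ℤⁿ has only finitely many minimal elements with respect to the conformal partial order ⊑, where x ⊑ y iff xᵢyᵢ ≥ 0 and |xᵢ| ≤ |yᵢ| for all i. -/
/-- The conformal partial order on ℤⁿ. -/
def IsConformal {n : ℕ} (x y : Fin n → ℤ) : Prop :=
  ∀ i, x i * y i ≥ 0 ∧ |x i| ≤ |y i|

/-! The encoding `a ↦ (a⁺, a⁻)` of an integer by its positive and negative parts turns the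
conformal order into the product order on `(ℕ × ℕ)ⁿ`, which is a well quasi-order by Dickson's
lemma. Minimal elements of a set form an antichain, and antichains of a well quasi-order are
finite. -/

lemma Int.mul_nonneg_and_abs_le_of_toNat_le {a b : ℤ} (hpos : a.toNat ≤ b.toNat)
    (hneg : (-a).toNat ≤ (-b).toNat) : a * b ≥ 0 ∧ |a| ≤ |b| := by
  refine ⟨?_, by rw [Int.abs_eq_natAbs, Int.abs_eq_natAbs]; omega⟩
  rcases lt_trichotomy a 0 with ha | rfl | ha
  · exact mul_nonneg_of_nonpos_of_nonpos ha.le (by omega)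
  · simp
  · exact mul_nonneg ha.le (by omega)

def posNegParts {n : ℕ} (x : Fin n → ℤ) : Fin n → ℕ × ℕ :=
  fun i => ((x i).toNat, (-x i).toNat)

lemma isConformal_of_posNegParts_le {n : ℕ} {x y : Fin n → ℤ}
    (h : posNegParts x ≤ posNegParts y) : IsConformal x y :=
  fun i => Int.mul_nonneg_and_abs_le_of_toNat_le (h i).1 (h i).2

theorem wellQuasiOrdered_isConformal (n : ℕ) : WellQuasiOrdered (@IsConformal n) := fun f => by
  obtain ⟨i, j, hij, hle⟩ := wellQuasiOrdered_le (posNegParts ∘ f)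
  exact ⟨i, j, hij, isConformal_of_posNegParts_le hle⟩

theorem finitely_many_conformal_minimal_general (n : ℕ) (S : Set (Fin n → ℤ)) :
    {x ∈ S | ∀ y ∈ S, IsConformal y x → y = x}.Finite := by
  have hanti : IsAntichain IsConformal {x ∈ S | ∀ y ∈ S, IsConformal y x → y = x} :=
    fun x hx y hy hne hxy => hne (hy.2 x hx.1 hxy)
  exact hanti.finite_of_wellQuasiOrdered (wellQuasiOrdered_isConformal n)

/-- Every nonempty subset of ℤⁿ has finitely many ⊑-minimal elements. -/
theorem finitely_many_conformal_minimal (n : ℕ) (S : Set (Fin n → ℤ))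
    (hS : S.Nonempty) :
    {x ∈ S | ∀ y ∈ S, IsConformal y x → y = x}.Finite :=
  finitely_many_conformal_minimal_general n S
end

section
/- Let A be an integer m×n matrix and let G(A) be its Graver basis, defined as the set of ⊑-minimal elements of {x ∈ ℤⁿ : Ax = 0, x ≠ 0}. Then every nonzero x ∈ ℤⁿ with Ax = 0 can be written as a finite conformal sum x = Σᵢ gᵢ with each gᵢ ∈ G(A) and gᵢ ⊑ x (elements may repeat). -/
/-- The Graver basis of an integer matrix: the ⊑-minimal elements of the
set of nonzero integer vectors in the kernel. -/
def Graver {m n : ℕ} (A : Matrix (Fin m) (Fin n) ℤ) : Set (Fin n → ℤ) :=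
  {x | x ≠ 0 ∧ A.mulVec x = 0 ∧
    ∀ y : Fin n → ℤ, y ≠ 0 → A.mulVec y = 0 → IsConformal y x → y = x}

lemma conf_refl {n : ℕ} (x : Fin n → ℤ) : IsConformal x x :=
  fun i => ⟨mul_self_nonneg _, le_refl _⟩

lemma coord_trans (a b c : ℤ) (h1 : a*b ≥ 0) (h2 : |a| ≤ |b|)
    (h3 : b*c ≥ 0) (h4 : |b| ≤ |c|) : a*c ≥ 0 := by
  rcases eq_or_ne b 0 with hb | hb
  · have ha : a = 0 := by
      have : |a| ≤ 0 := by simpa [hb] using h2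
      simpa [abs_nonpos_iff] using this
    simp [ha]
  · nlinarith [mul_nonneg h1 h3, mul_self_pos.mpr hb]

lemma conf_trans {n : ℕ} {x y z : Fin n → ℤ} (h1 : IsConformal x y)
    (h2 : IsConformal y z) : IsConformal x z := fun i =>
  ⟨coord_trans _ _ _ (h1 i).1 (h1 i).2 (h2 i).1 (h2 i).2,
   le_trans (h1 i).2 (h2 i).2⟩

lemma coord_sub (a b : ℤ) (h1 : b*a ≥ 0) (h2 : |b| ≤ |a|) :
    (a - b) * a ≥ 0 ∧ |a - b| + |b| = |a| := by
  rcases le_or_gt 0 a with ha | ha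
  · have hb0 : 0 ≤ b := by
      rcases ha.eq_or_lt with h | h
      · have : |b| ≤ 0 := by simpa [← h] using h2
        simp [abs_nonpos_iff] at this; simp [this]
      · nlinarith
    have hba : b ≤ a := by rwa [abs_of_nonneg hb0, abs_of_nonneg ha] at h2
    refine ⟨mul_nonneg (by linarith) ha, ?_⟩
    rw [abs_of_nonneg (by linarith : (0:ℤ) ≤ a - b), abs_of_nonneg hb0,
      abs_of_nonneg ha]
    ring
  · have hb0 : b ≤ 0 := by nlinarith
    have hba : a ≤ b := by
      rw [abs_of_nonpos hb0, abs_of_nonpos ha.le] at h2; linarith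
    refine ⟨by nlinarith, ?_⟩
    rw [abs_of_nonpos (by linarith : a - b ≤ 0), abs_of_nonpos hb0,
      abs_of_nonpos ha.le]
    ring

lemma coord_eq (a b : ℤ) (h1 : a*b ≥ 0) (h2 : |a| = |b|) : a = b := by
  rcases abs_eq_abs.mp h2 with h | h
  · exact h
  · subst h
    have hb : b = 0 := by nlinarith
    simp [hb]

lemma graver_aux (m n : ℕ) (A : Matrix (Fin m) (Fin n) ℤ) :
    ∀ N (x : Fin n → ℤ), (∑ i, (x i).natAbs) ≤ N → x ≠ 0 → A.mulVec x = 0 →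
    ∃ (k : ℕ) (g : Fin k → Fin n → ℤ),
      (∀ i, g i ∈ Graver A) ∧ (∀ i, IsConformal (g i) x) ∧ x = ∑ i, g i := by
  intro N
  induction N with
  | zero =>
    intro x hle hx _
    exfalso; apply hx; funext i
    have h0 : ∀ j ∈ Finset.univ, (x j).natAbs = 0 :=
      Finset.sum_eq_zero_iff.mp (Nat.le_zero.mp hle)
    exact Int.natAbs_eq_zero.mp (h0 i (Finset.mem_univ i))
  | succ N ih =>
    intro x hle hx hAx
    classical
    have hex : ∃ k : ℕ, ∃ y : Fin n → ℤ,
        (y ≠ 0 ∧ A.mulVec y = 0 ∧ IsConformal y x) ∧ (∑ i, (y i).natAbs) = k :=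
      ⟨_, x, ⟨hx, hAx, conf_refl x⟩, rfl⟩
    obtain ⟨y, ⟨hy0, hAy, hyx⟩, hyk⟩ := Nat.find_spec hex
    have hmin : ∀ z : Fin n → ℤ, z ≠ 0 → A.mulVec z = 0 → IsConformal z x →
        Nat.find hex ≤ ∑ i, (z i).natAbs := fun z h1 h2 h3 =>
      Nat.find_min' hex ⟨z, ⟨h1, h2, h3⟩, rfl⟩
    have hyG : y ∈ Graver A := by
      refine ⟨hy0, hAy, fun z hz0 hAz hzy => ?_⟩
      have hzx : IsConformal z x := conf_trans hzy hyx
      have hge : ∑ i, (y i).natAbs ≤ ∑ i, (z i).natAbs :=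
        hyk ▸ hmin z hz0 hAz hzx
      have hterm : ∀ i, (z i).natAbs ≤ (y i).natAbs := fun i => by
        have h := (hzy i).2
        rw [Int.abs_eq_natAbs, Int.abs_eq_natAbs] at h
        exact_mod_cast h
      have heq : ∀ i, (z i).natAbs = (y i).natAbs := by
        by_contra hne
        push_neg at hne
        obtain ⟨j, hj⟩ := hne
        have hjlt : (z j).natAbs < (y j).natAbs := lt_of_le_of_ne (hterm j) hj
        have : ∑ i, (z i).natAbs < ∑ i, (y i).natAbs :=
          Finset.sum_lt_sum (fun i _ => hterm i) ⟨j, Finset.mem_univ j, hjlt⟩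
        omega
      funext i
      refine coord_eq _ _ (hzy i).1 ?_
      rw [Int.abs_eq_natAbs, Int.abs_eq_natAbs]
      exact_mod_cast heq i
    have hAx' : A.mulVec (x - y) = 0 := by
      rw [Matrix.mulVec_sub, hAx, hAy, sub_zero]
    by_cases hx' : x - y = 0
    · have hxy : x = y := by rwa [sub_eq_zero] at hx'
      refine ⟨1, fun _ => y, fun i => hyG, fun i => hxy ▸ hyx, ?_⟩
      simp [hxy]
    · have hconf : IsConformal (x - y) x := fun i => by
        obtain ⟨h1, h2⟩ := coord_sub (x i) (y i) (hyx i).1 (hyx i).2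
        exact ⟨by simpa using h1, by
          have := abs_nonneg (y i)
          simp only [Pi.sub_apply]
          linarith⟩
      have hcoordn : ∀ i, ((x - y) i).natAbs + (y i).natAbs = (x i).natAbs := by
        intro i
        obtain ⟨_, h2⟩ := coord_sub (x i) (y i) (hyx i).1 (hyx i).2
        rw [Int.abs_eq_natAbs, Int.abs_eq_natAbs, Int.abs_eq_natAbs] at h2
        simp only [Pi.sub_apply]
        omega
      have hypos : 0 < ∑ i, (y i).natAbs := by
        by_contra h
        push_neg at h
        apply hy0; funext i
        have h0 : ∀ j ∈ Finset.univ, (y j).natAbs = 0 :=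
          Finset.sum_eq_zero_iff.mp (Nat.le_zero.mp h)
        exact Int.natAbs_eq_zero.mp (h0 i (Finset.mem_univ i))
      have hsum : (∑ i, ((x - y) i).natAbs) + ∑ i, (y i).natAbs
          = ∑ i, (x i).natAbs := by
        rw [← Finset.sum_add_distrib]
        exact Finset.sum_congr rfl (fun i _ => hcoordn i)
      obtain ⟨k, g, hg1, hg2, hg3⟩ := ih (x - y) (by omega) hx' hAx'
      refine ⟨k + 1, Fin.cons y g, fun i => ?_, fun i => ?_, ?_⟩
      · exact Fin.cases hyG (fun j => hg1 j) i
      · exact Fin.cases hyx (fun j => conf_trans (hg2 j) hconf) i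
      · rw [Fin.sum_cons, ← hg3]; abel

/-- Every nonzero integer kernel element is a conformal sum of Graver
basis elements (elements may repeat). -/
theorem conformal_sum_of_graver (m n : ℕ) (A : Matrix (Fin m) (Fin n) ℤ)
    (x : Fin n → ℤ) (hx : x ≠ 0) (hAx : A.mulVec x = 0) :
    ∃ (k : ℕ) (g : Fin k → Fin n → ℤ),
      (∀ i, g i ∈ Graver A) ∧ (∀ i, IsConformal (g i) x) ∧ x = ∑ i, g i :=
  graver_aux m n A _ x le_rfl hx hAx
end

section
/- Let A be an integer m×n matrix with Graver basis G(A). Every nonzero integer vector x with Ax = 0 can be written as a conformal sum x = Σ_{i=1}^t λᵢ gᵢ with t ≤ 2n−1, each λᵢ a nonnegative integer, each gᵢ ∈ G(A), and each gᵢ lying in the same orthant as x. -/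
/-!
Among the nonnegative rational combinations `x = ∑ λ_g • g` of the Graver elements conformal
to `x` (a pointed cone, so the objective is bounded), take one maximising `∑ λ_g` whose support
is linearly independent, hence of size `s ≤ n`. Rounding down, `r = ∑ (λ_g - ⌊λ_g⌋) • g` is an
integer kernel vector conformal to `x`, hence a sum of `N` Graver elements conformal to `x`.
Adding these to the `⌊λ_g⌋` gives another feasible combination, so maximality forces
`N ≤ ∑ (λ_g - ⌊λ_g⌋) < s`, and `x = ∑ ⌊λ_g⌋ • g + r` uses at most `2 s - 1` Graver elements.
-/

open Finset

theorem mul_nonneg_and_abs_le_iff_mem_uIcc {R : Type*} [CommRing R] [LinearOrder R]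
    [IsStrictOrderedRing R] {a b : R} : 0 ≤ a * b ∧ |a| ≤ |b| ↔ a ∈ Set.uIcc 0 b := by
  rw [Set.mem_uIcc]
  constructor
  · rintro ⟨hab, habs⟩
    rcases le_total 0 b with hb | hb
    · obtain ⟨h₁, h₂⟩ := abs_le.1 (abs_of_nonneg hb ▸ habs)
      exact Or.inl ⟨by nlinarith, h₂⟩
    · obtain ⟨h₁, h₂⟩ := abs_le.1 (abs_of_nonpos hb ▸ habs)
      exact Or.inr ⟨by linarith, by nlinarith⟩
  · rintro (⟨h₀, h⟩ | ⟨h, h₀⟩)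
    · exact ⟨mul_nonneg h₀ (h₀.trans h), abs_le_abs_of_nonneg h₀ h⟩
    · exact ⟨mul_nonneg_of_nonpos_of_nonpos h₀ (h.trans h₀), abs_le_abs_of_nonpos h₀ h⟩

theorem sum_mul_mem_uIcc {ι R : Type*} [Fintype ι] [Ring R] [LinearOrder R] [IsOrderedRing R]
    {a b u : ι → R} {z : R} (ha : 0 ≤ a) (hab : a ≤ b) (hu : ∀ i, u i ∈ Set.uIcc 0 z) :
    ∑ i, a i * u i ∈ Set.uIcc 0 (∑ i, b i * u i) := by
  rcases le_total 0 z with hz | hz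
  · have hu : ∀ i, 0 ≤ u i := fun i => (Set.uIcc_of_le hz ▸ hu i).1
    exact Set.mem_uIcc_of_le (sum_nonneg fun i _ => mul_nonneg (ha i) (hu i))
      (sum_le_sum fun i _ => mul_le_mul_of_nonneg_right (hab i) (hu i))
  · have hu : ∀ i, u i ≤ 0 := fun i => (Set.uIcc_of_ge hz ▸ hu i).2
    exact Set.mem_uIcc_of_ge (sum_le_sum fun i _ => mul_le_mul_of_nonpos_right (hab i) (hu i))
      (sum_nonpos fun i _ => mul_nonpos_of_nonneg_of_nonpos (ha i) (hu i))

theorem LinearIndepOn.eq_of_sum_smul_eq {ι R V : Type*} [Fintype ι] [Ring R] [AddCommGroup V]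
    [Module R V] {v : ι → V} {s : Finset ι} (h : LinearIndepOn R v s)
    {c c' : ι → R} (hc : ∀ i ∉ s, c i = 0) (hc' : ∀ i ∉ s, c' i = 0)
    (heq : ∑ i, c i • v i = ∑ i, c' i • v i) : c = c' := by
  have hsum (c : ι → R) (hc : ∀ i ∉ s, c i = 0) : ∑ i ∈ s, c i • v i = ∑ i, c i • v i :=
    sum_subset (subset_univ s) fun i _ hi => by rw [hc i hi, zero_smul]
  funext i
  by_cases hi : i ∈ s
  · refine sub_eq_zero.1 (linearIndepOn_finset_iff.1 h (c - c') ?_ i hi)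
    simp only [Pi.sub_apply, sub_smul, sum_sub_distrib, hsum c hc, hsum c' hc', heq, sub_self]
  · rw [hc i hi, hc' i hi]

section Cone

variable {ι 𝕜 V : Type*} [Fintype ι] [Field 𝕜] [LinearOrder 𝕜] [IsStrictOrderedRing 𝕜]
  [AddCommGroup V] [Module 𝕜 V] {v : ι → V}

theorem exists_add_smul_nonneg_eq_zero {c d : ι → 𝕜} (hc : 0 ≤ c) (hd : ∃ i, d i < 0) :
    ∃ t : 𝕜, 0 ≤ t ∧ 0 ≤ c + t • d ∧ ∃ i, d i < 0 ∧ c i + t * d i = 0 := by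
  classical
  obtain ⟨i₀, hi₀, hmin⟩ := exists_min_image {i | d i < 0} (fun i => c i / -d i)
    (by simpa [Finset.Nonempty] using hd)
  rw [mem_filter_univ] at hi₀
  refine ⟨c i₀ / -d i₀, div_nonneg (hc i₀) (by linarith), fun i => ?_, i₀, hi₀, ?_⟩
  · by_cases hi : d i < 0
    · have := hmin i (by simpa using hi)
      rw [le_div_iff₀ (by linarith)] at this
      simp only [Pi.add_apply, Pi.smul_apply, smul_eq_mul, Pi.zero_apply]
      linarith
    · exact add_nonneg (hc i) (mul_nonneg (div_nonneg (hc i₀) (by linarith)) (not_lt.1 hi))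
  · field_simp [hi₀.ne]
    ring

theorem exists_sum_smul_eq_zero_of_not_linearIndepOn {c : ι → 𝕜}
    (hind : ¬LinearIndepOn 𝕜 v ({i | c i ≠ 0} : Finset ι)) :
    ∃ d : ι → 𝕜, ∑ i, d i • v i = 0 ∧ 0 ≤ ∑ i, d i ∧ (∀ i, c i = 0 → d i = 0) ∧ d ≠ 0 := by
  classical
  obtain ⟨f, hf, i₀, hi₀, hfi₀⟩ := not_linearIndepOn_finset_iff.1 hind
  set d : ι → 𝕜 := fun i => if c i ≠ 0 then f i else 0
  have hdv : ∑ i, d i • v i = 0 := by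
    simpa only [d, ite_smul, zero_smul, ← sum_filter] using hf
  have hdc (i : ι) (hi : c i = 0) : d i = 0 := if_neg (not_not.2 hi)
  have hd : d ≠ 0 := Function.ne_iff.2 ⟨i₀, by simpa [d, (mem_filter_univ i₀).1 hi₀] using hfi₀⟩
  rcases le_total 0 (∑ i, d i) with h | h
  · exact ⟨d, hdv, h, hdc, hd⟩
  · exact ⟨-d, by simp [neg_smul, hdv], by simpa using h, fun i hi => by simp [hdc i hi],
      neg_ne_zero.2 hd⟩

theorem exists_support_ssubset_of_not_linearIndepOn
    (hv : ∀ d : ι → 𝕜, 0 ≤ d → ∑ i, d i • v i = 0 → d = 0) {c : ι → 𝕜} (hc : 0 ≤ c)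
    (hind : ¬LinearIndepOn 𝕜 v ({i | c i ≠ 0} : Finset ι)) :
    ∃ c' : ι → 𝕜, 0 ≤ c' ∧ ∑ i, c' i • v i = ∑ i, c i • v i ∧ ∑ i, c i ≤ ∑ i, c' i ∧
      ({i | c' i ≠ 0} : Finset ι) ⊂ ({i | c i ≠ 0} : Finset ι) := by
  obtain ⟨d, hdv, hdsum, hdc, hdne⟩ := exists_sum_smul_eq_zero_of_not_linearIndepOn hind
  -- The cone is pointed, so `d` has a negative entry, which bounds the step along `d`.
  obtain ⟨t, ht, hct, i₁, hdi₁, hci₁⟩ :=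
    exists_add_smul_nonneg_eq_zero (d := d) hc (by by_contra! h; exact hdne (hv d h hdv))
  refine ⟨c + t • d, hct, ?_, ?_, ?_⟩
  · simp only [Pi.add_apply, Pi.smul_apply, smul_eq_mul, add_smul, mul_smul, sum_add_distrib,
      ← smul_sum, hdv, smul_zero, add_zero]
  · simp only [Pi.add_apply, Pi.smul_apply, smul_eq_mul, sum_add_distrib, ← mul_sum]
    exact le_add_of_nonneg_right (mul_nonneg ht hdsum)
  · refine ssubset_iff_of_subset (fun i => ?_) |>.2 ⟨i₁, ?_, ?_⟩
    · simp only [mem_filter_univ, Pi.add_apply, Pi.smul_apply, smul_eq_mul]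
      intro h hc0
      apply h
      rw [hc0, hdc i hc0, mul_zero, add_zero]
    · simp only [mem_filter_univ]
      exact fun hc0 => hdi₁.ne (hdc i₁ hc0)
    · simpa using hci₁

theorem exists_linearIndepOn_support
    (hv : ∀ d : ι → 𝕜, 0 ≤ d → ∑ i, d i • v i = 0 → d = 0) {c : ι → 𝕜} (hc : 0 ≤ c) :
    ∃ c' : ι → 𝕜, 0 ≤ c' ∧ ∑ i, c' i • v i = ∑ i, c i • v i ∧ ∑ i, c i ≤ ∑ i, c' i ∧
      LinearIndepOn 𝕜 v ({i | c' i ≠ 0} : Finset ι) := by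
  induction hk : #({i | c i ≠ 0} : Finset ι) using Nat.strong_induction_on generalizing c with
  | _ k ih =>
  by_cases hind : LinearIndepOn 𝕜 v ({i | c i ≠ 0} : Finset ι)
  · exact ⟨c, hc, rfl, le_rfl, hind⟩
  obtain ⟨c', hc', hc'v, hc'sum, hsub⟩ := exists_support_ssubset_of_not_linearIndepOn hv hc hind
  obtain ⟨c'', hc'', hc''v, hc''sum, hli⟩ := ih _ (hk ▸ card_lt_card hsub) hc' rfl
  exact ⟨c'', hc'', hc''v.trans hc'v, hc'sum.trans hc''sum, hli⟩

theorem exists_linearIndepOn_support_isMax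
    (hv : ∀ d : ι → 𝕜, 0 ≤ d → ∑ i, d i • v i = 0 → d = 0) {x : V} {c₀ : ι → 𝕜}
    (hc₀ : 0 ≤ c₀) (hc₀x : ∑ i, c₀ i • v i = x) :
    ∃ c : ι → 𝕜, 0 ≤ c ∧ ∑ i, c i • v i = x ∧ LinearIndepOn 𝕜 v ({i | c i ≠ 0} : Finset ι) ∧
      ∀ c' : ι → 𝕜, 0 ≤ c' → ∑ i, c' i • v i = x → ∑ i, c' i ≤ ∑ i, c i := by
  classical
  set F := {c : ι → 𝕜 | 0 ≤ c ∧ ∑ i, c i • v i = x ∧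
    LinearIndepOn 𝕜 v ({i | c i ≠ 0} : Finset ι)}
  have hinj : Set.InjOn (fun c : ι → 𝕜 => ({i | c i ≠ 0} : Finset ι)) F := by
    rintro c ⟨-, hcx, hli⟩ c' ⟨-, hc'x, -⟩
      (hsupp : ({i | c i ≠ 0} : Finset ι) = ({i | c' i ≠ 0} : Finset ι))
    refine hli.eq_of_sum_smul_eq (fun i hi => ?_) (fun i hi => ?_) (hcx.trans hc'x.symm)
    · simpa using hi
    · rw [hsupp] at hi
      simpa using hi
  have hFne : F.Nonempty := by
    obtain ⟨c, hc, hcx, -, hli⟩ := exists_linearIndepOn_support hv hc₀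
    exact ⟨c, hc, hcx.trans hc₀x, hli⟩
  obtain ⟨c, ⟨hc, hcx, hli⟩, hmax⟩ :=
    F.exists_max_image (fun c => ∑ i, c i) (.of_finite_image (Set.toFinite _) hinj) hFne
  refine ⟨c, hc, hcx, hli, fun c' hc' hc'x => ?_⟩
  obtain ⟨c'', hc'', hc''x, hsum, hli''⟩ := exists_linearIndepOn_support hv hc'
  exact hsum.trans (hmax c'' ⟨hc'', hc''x.trans hc'x, hli''⟩)

end Cone

namespace IsConformal

variable {n : ℕ} {x y z : Fin n → ℤ}

theorem iff_mem_uIcc : IsConformal y x ↔ ∀ i, y i ∈ Set.uIcc 0 (x i) :=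
  forall_congr' fun _ => mul_nonneg_and_abs_le_iff_mem_uIcc

theorem refl (x : Fin n → ℤ) : IsConformal x x :=
  iff_mem_uIcc.2 fun _ => Set.right_mem_uIcc

theorem trans (hzy : IsConformal z y) (hyx : IsConformal y x) : IsConformal z x := by
  rw [iff_mem_uIcc] at *
  exact fun i => Set.uIcc_subset_uIcc Set.left_mem_uIcc (hyx i) (hzy i)

theorem self_sub (hyx : IsConformal y x) : IsConformal (x - y) x := by
  rw [iff_mem_uIcc] at *
  intro i
  have := hyx i
  simp only [Set.mem_uIcc, Pi.sub_apply] at *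
  omega

end IsConformal

def l1Norm {n : ℕ} (y : Fin n → ℤ) : ℕ := ∑ i, (y i).natAbs

open Matrix

section Graver

variable {m n : ℕ} (A : Matrix (Fin m) (Fin n) ℤ) {x y : Fin n → ℤ}

theorem IsConformal.l1Norm_sub_lt (hyx : IsConformal y x) (hy : y ≠ 0) :
    l1Norm (x - y) < l1Norm x := by
  rw [IsConformal.iff_mem_uIcc] at hyx
  obtain ⟨j, hj⟩ := Function.ne_iff.1 hy
  refine sum_lt_sum (fun i _ => ?_) ⟨j, mem_univ j, ?_⟩
  · have := hyx i
    simp only [Set.mem_uIcc, Pi.sub_apply] at *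
    omega
  · have := hyx j
    simp only [Set.mem_uIcc, Pi.sub_apply, Pi.zero_apply] at *
    omega

theorem exists_mem_graver_isConformal (hy : y ≠ 0) (hAy : A *ᵥ y = 0) :
    ∃ g ∈ Graver A, IsConformal g y := by
  obtain ⟨g, ⟨hg, hAg, hgy⟩, hmin⟩ := (InvImage.wf l1Norm wellFounded_lt).has_min
    {z | z ≠ 0 ∧ A *ᵥ z = 0 ∧ IsConformal z y} ⟨y, hy, hAy, .refl y⟩
  refine ⟨g, ⟨hg, hAg, fun w hw hAw hwg => ?_⟩, hgy⟩
  by_contra hne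
  have := hwg.self_sub.l1Norm_sub_lt (sub_ne_zero.2 (Ne.symm hne))
  rw [sub_sub_cancel] at this
  exact hmin w ⟨hw, hAw, hwg.trans hgy⟩ this

theorem finite_setOf_isConformal (x : Fin n → ℤ) : {y | IsConformal y x}.Finite := by
  simp only [IsConformal.iff_mem_uIcc]
  exact Set.Finite.pi' fun i => Set.finite_uIcc 0 (x i)

noncomputable def conformalGraver (x : Fin n → ℤ) : Finset (Fin n → ℤ) :=
  ((finite_setOf_isConformal x).inter_of_right (Graver A)).toFinset

theorem mem_conformalGraver {g : Fin n → ℤ} :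
    g ∈ conformalGraver A x ↔ g ∈ Graver A ∧ IsConformal g x := by
  simp [conformalGraver, and_comm]

theorem exists_nat_sum_eq_of_isConformal (hAy : A *ᵥ y = 0) (hyx : IsConformal y x) :
    ∃ κ : conformalGraver A x → ℕ, ∑ g, κ g • (g : Fin n → ℤ) = y := by
  classical
  induction hk : l1Norm y using Nat.strong_induction_on generalizing y with
  | _ k ih =>
  by_cases hy : y = 0
  · exact ⟨0, by simp [hy]⟩
  obtain ⟨g, hgG, hgy⟩ := exists_mem_graver_isConformal A hy hAy
  have hg : g ∈ conformalGraver A x := (mem_conformalGraver A).2 ⟨hgG, hgy.trans hyx⟩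
  obtain ⟨κ, hκ⟩ := ih _ (hk ▸ hgy.l1Norm_sub_lt hgG.1)
    (by rw [Matrix.mulVec_sub, hAy, hgG.2.1, sub_zero]) (hgy.self_sub.trans hyx) rfl
  refine ⟨κ + Pi.single ⟨g, hg⟩ 1, ?_⟩
  rw [← sub_add_cancel y g, ← hκ]
  simp only [Pi.add_apply, add_smul, sum_add_distrib, add_right_inj]
  rw [Fintype.sum_eq_single ⟨g, hg⟩ fun h hne => by simp [hne]]
  simp

end Graver

section RationalCombinations

variable {ι : Type*} [Fintype ι] {n : ℕ} {g : ι → Fin n → ℤ} {x y : Fin n → ℤ}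

theorem sum_smul_intCast_eq_iff (c : ι → ℚ) :
    ∑ i, c i • (fun j => (g i j : ℚ)) = (fun j => (x j : ℚ)) ↔ ∀ j, ∑ i, c i * g i j = x j := by
  simp [funext_iff, Finset.sum_apply]

theorem IsConformal.intCast_mem_uIcc (hyx : IsConformal y x) (j : Fin n) :
    (y j : ℚ) ∈ Set.uIcc 0 (x j : ℚ) := by
  have := IsConformal.iff_mem_uIcc.1 hyx j
  simp only [Set.mem_uIcc] at *
  exact_mod_cast this

theorem eq_zero_of_nonneg_of_sum_smul_eq_zero (hg : ∀ i, g i ≠ 0 ∧ IsConformal (g i) x)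
    {d : ι → ℚ} (hd : 0 ≤ d) (hsum : ∑ i, d i • (fun j => (g i j : ℚ)) = 0) : d = 0 := by
  classical
  funext i₀
  obtain ⟨j, hj⟩ := Function.ne_iff.1 (hg i₀).1
  have hsumj : ∑ i, d i * g i j = 0 := by simpa [Finset.sum_apply] using congrFun hsum j
  have hle : Pi.single i₀ (d i₀) ≤ d := fun i => by
    by_cases h : i = i₀
    · subst h; simp
    · simpa [h] using hd i
  have := sum_mul_mem_uIcc (Pi.single_nonneg.2 (hd i₀)) hle fun i => (hg i).2.intCast_mem_uIcc j
  rw [hsumj, Set.uIcc_self, Set.mem_singleton_iff, Fintype.sum_eq_single i₀ fun i h => by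
    simp [h]] at this
  exact (by simpa using this : d i₀ = 0 ∨ g i₀ j = 0).resolve_right hj

theorem isConformal_of_sum_mul (hg : ∀ i, IsConformal (g i) x) {a b : ι → ℚ} (ha : 0 ≤ a)
    (hab : a ≤ b) (hx : ∀ j, ∑ i, b i * g i j = x j) (hy : ∀ j, ∑ i, a i * g i j = y j) :
    IsConformal y x := by
  refine IsConformal.iff_mem_uIcc.2 fun j => ?_
  have := sum_mul_mem_uIcc ha hab fun i => (hg i).intCast_mem_uIcc j
  rw [hx j, hy j] at this
  simp only [Set.mem_uIcc] at *
  exact_mod_cast this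

end RationalCombinations

section Rounding

variable {ι : Type*} [Fintype ι]

theorem card_filter_ne_zero_le_sum (κ : ι → ℕ) : #{i | κ i ≠ 0} ≤ ∑ i, κ i := by
  classical
  calc #{i | κ i ≠ 0} = ∑ i ∈ {i | κ i ≠ 0}, 1 := card_eq_sum_ones _
    _ ≤ ∑ i ∈ {i | κ i ≠ 0}, κ i :=
      sum_le_sum fun i hi => Nat.one_le_iff_ne_zero.2 (by simpa using hi)
    _ = ∑ i, κ i := sum_filter_ne_zero _

theorem le_card_sub_one_of_le_sum_sub_floor {R : Type*} [Ring R] [LinearOrder R]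
    [IsStrictOrderedRing R] [FloorSemiring R] {c : ι → R} {N : ℕ}
    (hN : (N : R) ≤ ∑ i, (c i - ⌊c i⌋₊)) : N ≤ #{i | c i ≠ 0} - 1 := by
  classical
  rw [← sum_filter_of_ne (p := fun i => c i ≠ 0) fun i _ h hc => h (by simp [hc])] at hN
  rcases eq_empty_or_nonempty ({i | c i ≠ 0} : Finset ι) with h | h
  · rw [h, sum_empty, Nat.cast_nonpos] at hN
    omega
  · have := hN.trans_lt <| sum_lt_sum_of_nonempty h fun i _ =>
      sub_lt_iff_lt_add'.2 (Nat.lt_floor_add_one (c i))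
    rw [sum_const, nsmul_one, Nat.cast_lt] at this
    omega

variable {m n : ℕ} (A : Matrix (Fin m) (Fin n) ℤ) {x : Fin n → ℤ} {g : ι → Fin n → ℤ}

theorem exists_nat_coeffs_card_le (hAx : A *ᵥ x = 0)
    (hg : ∀ i, g i ∈ Graver A ∧ IsConformal (g i) x)
    (hdec : ∀ y, A *ᵥ y = 0 → IsConformal y x → ∃ κ : ι → ℕ, ∑ i, κ i • g i = y)
    {c : ι → ℚ} (hc : 0 ≤ c) (hcx : ∀ j, ∑ i, c i * g i j = x j)
    (hmax : ∀ c' : ι → ℚ, 0 ≤ c' → (∀ j, ∑ i, c' i * g i j = x j) → ∑ i, c' i ≤ ∑ i, c i) :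
    ∃ ν : ι → ℕ, ∑ i, ν i • g i = x ∧ #{i | ν i ≠ 0} ≤ 2 * #{i | c i ≠ 0} - 1 := by
  classical
  set μ : ι → ℕ := fun i => ⌊c i⌋₊
  set r := x - ∑ i, μ i • g i
  have hAg (i : ι) : A *ᵥ g i = 0 := (hg i).1.2.1
  have hAr : A *ᵥ r = 0 := by
    simp only [r, mulVec_sub, mulVec_sum, mulVec_smul, hAg, smul_zero, sum_const_zero, hAx,
      sub_zero]
  have hr : ∀ j, ∑ i, (c i - μ i) * g i j = r j := fun j => by
    simp [r, sub_mul, sum_sub_distrib, hcx, Finset.sum_apply]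
  have hrx : IsConformal r x := isConformal_of_sum_mul (fun i => (hg i).2)
    (fun i => sub_nonneg.2 (Nat.floor_le (hc i))) (fun i => sub_le_self _ (Nat.cast_nonneg _))
    hcx hr
  obtain ⟨κ, hκ⟩ := hdec r hAr hrx
  have hνx : ∑ i, (μ + κ) i • g i = x := by
    simp only [Pi.add_apply, add_smul, sum_add_distrib, hκ, r, add_sub_cancel]
  have hκle : ((∑ i, κ i : ℕ) : ℚ) ≤ ∑ i, (c i - μ i) := by
    have := hmax (fun i => ((μ + κ) i : ℚ)) (fun i => Nat.cast_nonneg _) fun j => by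
      rw [← hνx]; simp [Finset.sum_apply]
    simp only [Pi.add_apply, Nat.cast_add, sum_add_distrib] at this
    rw [sum_sub_distrib, Nat.cast_sum]
    linarith
  refine ⟨μ + κ, hνx, ?_⟩
  calc #{i | (μ + κ) i ≠ 0}
      ≤ #(({i | c i ≠ 0} : Finset ι) ∪ ({i | κ i ≠ 0} : Finset ι)) := card_le_card fun i => by
        simp only [mem_filter_univ, mem_union, Pi.add_apply, μ]
        contrapose!
        rintro ⟨hc0, hκ0⟩
        simp [hc0, hκ0]
    _ ≤ #({i | c i ≠ 0} : Finset ι) + #{i | κ i ≠ 0} := card_union_le _ _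
    _ ≤ #({i | c i ≠ 0} : Finset ι) + (#({i | c i ≠ 0} : Finset ι) - 1) :=
      Nat.add_le_add_left ((card_filter_ne_zero_le_sum κ).trans
        (le_card_sub_one_of_le_sum_sub_floor hκle)) _
    _ ≤ 2 * #{i | c i ≠ 0} - 1 := by omega

end Rounding

theorem exists_fin_sum_eq {ι M : Type*} [Fintype ι] [AddCommMonoid M] (f : ι → M)
    (s : Finset ι) (hs : ∀ i ∉ s, f i = 0) : ∃ e : Fin #s → ι, ∑ i, f i = ∑ k, f (e k) :=
  ⟨fun k => s.equivFin.symm k, by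
    rw [← sum_subset (subset_univ s) fun i _ hi => hs i hi, ← sum_coe_sort s,
      ← s.equivFin.symm.sum_comp]⟩

theorem exists_isMax_coeffs_card_le {m n : ℕ} (A : Matrix (Fin m) (Fin n) ℤ) {x : Fin n → ℤ}
    (hAx : A *ᵥ x = 0) :
    ∃ c : conformalGraver A x → ℚ, 0 ≤ c ∧ (∀ j, ∑ g, c g * (g : Fin n → ℤ) j = x j) ∧
      #{g | c g ≠ 0} ≤ n ∧ ∀ c' : conformalGraver A x → ℚ, 0 ≤ c' →
        (∀ j, ∑ g, c' g * (g : Fin n → ℤ) j = x j) → ∑ g, c' g ≤ ∑ g, c g := by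
  have hg (g : conformalGraver A x) := (mem_conformalGraver A).1 g.2
  obtain ⟨κ, hκ⟩ := exists_nat_sum_eq_of_isConformal A hAx (.refl x)
  obtain ⟨c, hc, hcx, hli, hmax⟩ := exists_linearIndepOn_support_isMax
    (v := fun (g : conformalGraver A x) j => ((g : Fin n → ℤ) j : ℚ))
    (fun d hd hsum =>
      eq_zero_of_nonneg_of_sum_smul_eq_zero (fun g => ⟨(hg g).1.1, (hg g).2⟩) hd hsum)
    (c₀ := fun g => (κ g : ℚ)) (fun g => Nat.cast_nonneg _)
    ((sum_smul_intCast_eq_iff (x := x) _).2 fun j => by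
      rw [← congrFun hκ j]
      simp [Finset.sum_apply])
  refine ⟨c, hc, (sum_smul_intCast_eq_iff c).1 hcx, by simpa using hli.fintype_card_le_finrank,
    fun c' hc' hc'x => hmax c' hc' ((sum_smul_intCast_eq_iff c').2 hc'x)⟩

theorem conformal_caratheodory_general (m n : ℕ) (A : Matrix (Fin m) (Fin n) ℤ)
    (x : Fin n → ℤ) (hAx : A.mulVec x = 0) :
    ∃ (t : ℕ), t ≤ 2 * n - 1 ∧
      ∃ (lam : Fin t → ℕ) (g : Fin t → Fin n → ℤ),
        (∀ i, g i ∈ Graver A) ∧ (∀ i j, g i j * x j ≥ 0) ∧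
        x = ∑ i, (lam i : ℤ) • g i := by
  obtain ⟨c, hc, hcx, hcard, hmax⟩ := exists_isMax_coeffs_card_le A hAx
  have hg (g : conformalGraver A x) := (mem_conformalGraver A).1 g.2
  obtain ⟨ν, hνx, hν⟩ := exists_nat_coeffs_card_le A hAx (g := Subtype.val) hg
    (fun y hAy hyx => exists_nat_sum_eq_of_isConformal A hAy hyx) hc hcx hmax
  obtain ⟨e, he⟩ := exists_fin_sum_eq (fun g => ν g • (g : Fin n → ℤ)) {g | ν g ≠ 0}
    fun g hg => by rw [(by simpa using hg : ν g = 0), zero_smul]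
  refine ⟨_, hν.trans (by omega), fun k => ν (e k), fun k => e k, fun k => (hg (e k)).1,
    fun k j => ((hg (e k)).2 j).1, ?_⟩
  simpa [natCast_zsmul] using hνx.symm.trans he

/-- Positive integer Carathéodory bound: every nonzero integer kernel
element is a conformal sum of at most 2n-1 Graver basis elements with
nonnegative integer coefficients, all lying in the same orthant as x. -/
theorem conformal_caratheodory (m n : ℕ) (A : Matrix (Fin m) (Fin n) ℤ)
    (x : Fin n → ℤ) (hx : x ≠ 0) (hAx : A.mulVec x = 0) :
    ∃ (t : ℕ), t ≤ 2 * n - 1 ∧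
      ∃ (lam : Fin t → ℕ) (g : Fin t → Fin n → ℤ),
        (∀ i, g i ∈ Graver A) ∧ (∀ i j, g i j * x j ≥ 0) ∧
        x = ∑ i, (lam i : ℤ) • g i :=
  conformal_caratheodory_general m n A x hAx
end

section
/- Let A be an integer m×n matrix, l, u ∈ (ℤ ∪ {±∞})ⁿ, and b ∈ ℤᵐ. If there exists g in the Graver basis G(A) such that gᵢ ≤ 0 whenever uᵢ < ∞ and gᵢ ≥ 0 whenever lᵢ > −∞, then the set S = {x ∈ ℤⁿ : Ax = b, l ≤ x ≤ u} is either empty or infinite. -/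
/-- If some Graver basis element is compatible with the (possibly infinite)
bounds, then the feasible set is empty or infinite. -/
theorem graver_recession_empty_or_infinite (m n : ℕ)
    (A : Matrix (Fin m) (Fin n) ℤ) (b : Fin m → ℤ) (l u : Fin n → EReal)
    (g : Fin n → ℤ) (hg : g ∈ Graver A)
    (hgu : ∀ i, u i < ⊤ → g i ≤ 0)
    (hgl : ∀ i, ⊥ < l i → g i ≥ 0) :
    {x : Fin n → ℤ | A.mulVec x = b ∧
        ∀ i, l i ≤ ((x i : ℝ) : EReal) ∧ ((x i : ℝ) : EReal) ≤ u i} = ∅ ∨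
    {x : Fin n → ℤ | A.mulVec x = b ∧
        ∀ i, l i ≤ ((x i : ℝ) : EReal) ∧ ((x i : ℝ) : EReal) ≤ u i}.Infinite := by
  set S := {x : Fin n → ℤ | A.mulVec x = b ∧
      ∀ i, l i ≤ ((x i : ℝ) : EReal) ∧ ((x i : ℝ) : EReal) ≤ u i} with hS
  rcases Set.eq_empty_or_nonempty S with h | ⟨x, hxA, hxb⟩
  · exact Or.inl h
  · right
    obtain ⟨hg0, hgA, -⟩ := hg
    have hmem : ∀ k : ℕ, (fun i => x i + (k : ℤ) * g i) ∈ S := by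
      intro k
      constructor
      · have : A.mulVec (fun i => x i + (k : ℤ) * g i)
            = A.mulVec x + (k : ℤ) • A.mulVec g := by
          rw [← Matrix.mulVec_smul, ← Matrix.mulVec_add]
          congr 1
        rw [this, hgA, hxA]
        simp
      · intro i
        have hl := (hxb i).1
        have hu := (hxb i).2
        constructor
        · rcases le_or_gt 0 (g i) with hpos | hneg
          · refine le_trans hl ?_
            have : (x i : ℝ) ≤ ((x i + (k : ℤ) * g i : ℤ) : ℝ) := by
              have h1 : (0:ℝ) ≤ (g i : ℝ) := by exact_mod_cast hpos
              push_cast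
              nlinarith [Nat.cast_nonneg (α := ℝ) k]
            exact_mod_cast EReal.coe_le_coe_iff.mpr this
          · have : l i = ⊥ := by
              by_contra hne
              have := hgl i (bot_lt_iff_ne_bot.mpr (Ne.symm (by simpa using Ne.symm hne)))
              omega
            rw [this]; exact bot_le
        · rcases le_or_gt (g i) 0 with hneg | hpos
          · refine le_trans ?_ hu
            have : ((x i + (k : ℤ) * g i : ℤ) : ℝ) ≤ (x i : ℝ) := by
              have h1 : (g i : ℝ) ≤ 0 := by exact_mod_cast hneg
              push_cast
              nlinarith [Nat.cast_nonneg (α := ℝ) k]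
            exact_mod_cast EReal.coe_le_coe_iff.mpr this
          · have : u i = ⊤ := by
              by_contra hne
              have := hgu i (lt_top_iff_ne_top.mpr hne)
              omega
            rw [this]; exact le_top
    obtain ⟨j, hj⟩ := Function.ne_iff.mp hg0
    have hinj : Function.Injective (fun k : ℕ => (fun i => x i + (k : ℤ) * g i)) := by
      intro a b hab
      have := congrFun hab j
      simp only at this
      have : (a : ℤ) * g j = (b : ℤ) * g j := by omega
      have hgj : g j ≠ 0 := by simpa using hj
      have : (a : ℤ) = b := by
        exact mul_right_cancel₀ hgj this
      exact_mod_cast this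
    exact Set.infinite_of_injective_forall_mem hinj hmem
end
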